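/- There exists a σ-invariant Mycielski set X ⊂ Σ_2 (a countable union of Cantor sets) containing an uncountable set D such that every pair of distinct points of D is extremal distributionally 2-scrambled, and X contains no scrambled triple. -/

import Mathlib

open Filter

/-- Metric on Σ₂ = {0,1}^ℕ : d(u,v) = Σ_{i≥1} δ(u_i,v_i)/2^i (coordinates 0-indexed). -/
noncomputable def dist2 (u v : ℕ → Bool) : ℝ :=
  ∑' i : ℕ, if u i = v i then 0 else (1/2)^(i+1)

/-- The shift map. -/
def shift (u : ℕ → Bool) : ℕ → Bool := fun n => u (n + 1)

/-- Binary complement of a word. -/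
def wordCompl (B : List Bool) : List Bool := B.map (fun b => !b)

/-- Morse blocks: M_0 = 0, M_{i+1} = M_i followed by its complement. -/
def morseBlock : ℕ → List Bool
  | 0 => [false]
  | i + 1 => morseBlock i ++ wordCompl (morseBlock i)

/-- The Morse sequence, the limit of the Morse blocks. -/
def morse : ℕ → Bool := fun n => (morseBlock (n + 1)).getD n false

open Classical in
/-- Infinite concatenation of a sequence of (nonempty) blocks. -/
noncomputable def concatSeq (B : ℕ → List Bool) (k : ℕ) : Bool :=
  if h : ∃ n, ∑ i ∈ Finset.range n, (B i).length ≤ k ∧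
      k < ∑ i ∈ Finset.range (n + 1), (B i).length then
    (B h.choose).getD (k - ∑ i ∈ Finset.range h.choose, (B i).length) false
  else false

open Classical in
/-- Lower distributional function. -/
noncomputable def Phi (x y : ℕ → Bool) (δ : ℝ) : ℝ :=
  liminf (fun m : ℕ =>
    (((Finset.Ioo 0 m).filter (fun k => dist2 (shift^[k] x) (shift^[k] y) < δ)).card : ℝ) / m)
    atTop

open Classical in
/-- Upper distributional function. -/
noncomputable def PhiStar (x y : ℕ → Bool) (ε : ℝ) : ℝ :=
  limsup (fun m : ℕ =>
    (((Finset.Ioo 0 m).filter (fun k => dist2 (shift^[k] x) (shift^[k] y) < ε)).card : ℝ) / m)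
    atTop

/-- A Li-Yorke scrambled triple. -/
noncomputable def ScrTriple (x y z : ℕ → Bool) : Prop :=
  x ≠ y ∧ x ≠ z ∧ y ≠ z ∧
  liminf (fun k : ℕ => max (max (dist2 (shift^[k] x) (shift^[k] y))
      (dist2 (shift^[k] x) (shift^[k] z))) (dist2 (shift^[k] y) (shift^[k] z))) atTop = 0 ∧
  0 < limsup (fun k : ℕ => min (min (dist2 (shift^[k] x) (shift^[k] y))
      (dist2 (shift^[k] x) (shift^[k] z))) (dist2 (shift^[k] y) (shift^[k] z))) atTop

/-- Concatenation of Morse blocks M_{a j}, complemented where `e j = true`. -/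
noncomputable def blockPt (a : ℕ → ℕ) (e : ℕ → Bool) : ℕ → Bool :=
  concatSeq (fun j => if e j then wordCompl (morseBlock (a j)) else morseBlock (a j))

/-- A point occurring as in Theorem 2: odd-position blocks fixed, even-position blocks chosen by α. -/
noncomputable def xpt (a : ℕ → ℕ) (α : ℕ → Bool) : ℕ → Bool :=
  blockPt a (fun j => if j % 2 = 0 then α (j / 2) else false)

/-- Cantor set predicate. -/
def IsCantorSet (C : Set (ℕ → Bool)) : Prop :=
  C.Nonempty ∧ IsCompact C ∧ Perfect C ∧ IsTotallyDisconnected C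

/-- The Morse minimal set: orbit closure of the Morse sequence. -/
def morseMinimal : Set (ℕ → Bool) := closure {y | ∃ k : ℕ, y = shift^[k] morse}


/-- Diameter of a set with respect to the metric `dist2`. -/
noncomputable def diam2 (X : Set (ℕ → Bool)) : ℝ :=
  sSup {r : ℝ | ∃ u ∈ X, ∃ v ∈ X, r = dist2 u v}


/-!
The points of `X` are shifts of Thue–Morse sequences in which the blocks
`[2^(2^j), 2^(2^(j+1)))` are kept or complemented: odd blocks are always kept, even blocks are
complemented according to a parameter `α : ℕ → Bool`. Each block is so long that, at its end, it
fills almost all of the time elapsed so far. Two parameters agree on all odd blocks, and distinct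
ones disagree on infinitely many even blocks; this gives `Φ* ≡ 1` and `Φ(δ) = 0` on the family `D`
of unshifted points.

A triple in `X` is never scrambled. If two of its points are shifted by different amounts they
stay uniformly apart: both are eventually made of aligned `±` copies of the Thue–Morse block of
every length `2ⁿ`, a structure that no nonzero shift preserves. If all three are shifted by the
same amount, then at each time one of the current block and the next is odd, so two of the three
points agree on both blocks and the smallest of the three distances tends to `0`.
-/

open Function Set Topology

section ThueMorse

def thueMorse (n : ℕ) : Bool :=
  if h : n = 0 then false else xor (decide (n % 2 = 1)) (thueMorse (n / 2))
decreasing_by exact Nat.div_lt_self (Nat.pos_of_ne_zero h) one_lt_two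

@[simp] lemma thueMorse_zero : thueMorse 0 = false := by
  rw [thueMorse]; simp

lemma thueMorse_two_mul (n : ℕ) : thueMorse (2 * n) = thueMorse n := by
  rcases Nat.eq_zero_or_pos n with rfl | hn
  · rfl
  · rw [thueMorse, dif_neg (by omega)]
    simp

lemma thueMorse_two_mul_add_one (n : ℕ) : thueMorse (2 * n + 1) = !thueMorse n := by
  rw [thueMorse, dif_neg (by omega)]
  simp [show (2 * n + 1) / 2 = n by omega, Nat.add_mod]

lemma thueMorse_one : thueMorse 1 = true := by
  simpa using thueMorse_two_mul_add_one 0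

lemma thueMorse_two : thueMorse 2 = true :=
  (thueMorse_two_mul 1).trans thueMorse_one

lemma thueMorse_two_pow_mul_add {n q i : ℕ} (hi : i < 2 ^ n) :
    thueMorse (2 ^ n * q + i) = xor (thueMorse q) (thueMorse i) := by
  induction n generalizing i with
  | zero =>
    obtain rfl : i = 0 := by simpa using hi
    simp
  | succ n ih =>
    obtain ⟨j, rfl | rfl⟩ := Nat.even_or_odd' i
    · rw [show 2 ^ (n + 1) * q + 2 * j = 2 * (2 ^ n * q + j) by ring, thueMorse_two_mul,
        thueMorse_two_mul, ih (by omega)]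
    · rw [show 2 ^ (n + 1) * q + (2 * j + 1) = 2 * (2 ^ n * q + j) + 1 by ring,
        thueMorse_two_mul_add_one, thueMorse_two_mul_add_one, ih (by omega), Bool.xor_not]

lemma thueMorse_two_pow_mul (n q : ℕ) : thueMorse (2 ^ n * q) = thueMorse q := by
  simpa using thueMorse_two_pow_mul_add (n := n) (q := q) (Nat.two_pow_pos n)

end ThueMorse

def EventuallyThueMorse (u : ℕ → Bool) : Prop :=
  ∀ n, ∀ᶠ q in atTop, ∀ i < 2 ^ n, u (2 ^ n * q + i) = xor (thueMorse i) (u (2 ^ n * q))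

namespace EventuallyThueMorse

variable {u v : ℕ → Bool}

lemma comp_two_pow_mul (hu : EventuallyThueMorse u) (m : ℕ) :
    EventuallyThueMorse fun x => u (2 ^ m * x) := by
  intro n
  filter_upwards [hu (n + m)] with q hq i hi
  have hi' : 2 ^ m * i < 2 ^ (n + m) := by
    rw [pow_add, mul_comm (2 ^ n)]
    exact Nat.mul_lt_mul_of_pos_left hi (Nat.two_pow_pos m)
  rw [show 2 ^ m * (2 ^ n * q + i) = 2 ^ (n + m) * q + 2 ^ m * i by ring,
    show 2 ^ m * (2 ^ n * q) = 2 ^ (n + m) * q by ring, hq _ hi', thueMorse_two_pow_mul]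

/-- In an aligned block `0110` of `u` the letters at `4q + 1` and `4q + 2` are equal, while `v`
changes between the even position `4q + 1 + d` and the next one. -/
lemma eventually_ne_of_odd (hu : EventuallyThueMorse u) (hv : EventuallyThueMorse v)
    {d : ℕ} (hd : Odd d) :
    ∀ᶠ q in atTop, ∃ i < 2, u (4 * q + 1 + i) ≠ v (4 * q + 1 + i + d) := by
  obtain ⟨c, rfl⟩ := hd
  have hr : Tendsto (fun q => 2 * q + c + 1) atTop atTop :=
    tendsto_atTop_atTop.2 fun b => ⟨b, fun q hq => by omega⟩
  have hv1 := hv 1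
  rw [pow_one] at hv1
  have hv' : ∀ᶠ q in atTop, ∀ i < 2, v (2 * (2 * q + c + 1) + i) =
      xor (thueMorse i) (v (2 * (2 * q + c + 1))) :=
    hr.eventually hv1
  filter_upwards [hu 2, hv'] with q hu4 hv2
  have hu1 := hu4 1 (by norm_num)
  have hu2 := hu4 2 (by norm_num)
  have hv0 := hv2 1 (by norm_num)
  norm_num [thueMorse_one, thueMorse_two] at hu1 hu2 hv0
  by_contra! h
  have h0 := h 0 (by norm_num)
  have h1 := h 1 (by norm_num)
  rw [show 4 * q + 1 + 0 + (2 * c + 1) = 2 * (2 * q + c + 1) by ring] at h0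
  rw [show 4 * q + 1 + 1 + (2 * c + 1) = 2 * (2 * q + c + 1) + 1 by ring] at h1
  simp_all

/-- Decimating by the power of `2` in `d` reduces to an odd shift. -/
lemma exists_ne_of_ne_zero (hu : EventuallyThueMorse u) (hv : EventuallyThueMorse v)
    {d : ℕ} (hd : d ≠ 0) :
    ∃ L, ∀ᶠ k in atTop, ∃ i < L, u (k + i) ≠ v (k + i + d) := by
  obtain ⟨m, d', hd', rfl⟩ := Nat.exists_eq_two_pow_mul_odd hd
  obtain ⟨Q, hQ⟩ := eventually_atTop.1 <|
    (hu.comp_two_pow_mul m).eventually_ne_of_odd (hv.comp_two_pow_mul m) hd'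
  set c := 2 ^ m
  have hc0 : 0 < c := Nat.two_pow_pos m
  refine ⟨8 * c, eventually_atTop.2 ⟨4 * c * Q, fun k hk => ?_⟩⟩
  set q := k / (4 * c) + 1
  have hQq : Q ≤ q := by
    have := (Nat.le_div_iff_mul_le (by omega)).2 (by linarith : Q * (4 * c) ≤ k)
    omega
  obtain ⟨i, hi, hne⟩ := hQ q hQq
  have hlow : 4 * c * (k / (4 * c)) ≤ k := Nat.mul_div_le k (4 * c)
  have hhigh : k < 4 * c * (k / (4 * c)) + 4 * c := by
    have := Nat.lt_mul_div_succ k (show 0 < 4 * c by omega)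
    linarith
  have hp : c * (4 * q + 1 + i) = 4 * c * (k / (4 * c)) + 5 * c + c * i := by ring
  have hci : c * i ≤ c := by nlinarith
  refine ⟨c * (4 * q + 1 + i) - k, by omega, ?_⟩
  rwa [Nat.add_sub_cancel' (by omega), ← mul_add]

end EventuallyThueMorse

section Blocks

def blockStart (j : ℕ) : ℕ := 2 ^ 2 ^ j

/-- The block `[blockStart j, blockStart (j + 1))` containing `k`; the block `0` is `[0, 4)`. -/
def blockIndex (k : ℕ) : ℕ := Nat.log 2 (Nat.log 2 k)

lemma blockStart_succ (j : ℕ) : blockStart (j + 1) = blockStart j ^ 2 := by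
  rw [blockStart, blockStart, pow_succ, pow_mul]

lemma lt_blockStart (j : ℕ) : j < blockStart j :=
  Nat.lt_two_pow_self.trans Nat.lt_two_pow_self

lemma two_pow_dvd_blockStart {n j : ℕ} (h : n ≤ j) : 2 ^ n ∣ blockStart j :=
  Nat.pow_dvd_pow 2 (h.trans Nat.lt_two_pow_self.le)

lemma le_blockIndex {j k : ℕ} (h : blockStart j ≤ k) : j ≤ blockIndex k :=
  Nat.le_log_of_pow_le one_lt_two (Nat.le_log_of_pow_le one_lt_two h)

lemma blockIndex_le {j k : ℕ} (h : k < blockStart (j + 1)) : blockIndex k ≤ j :=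
  Nat.lt_succ_iff.1 <| Nat.log_lt_of_lt_pow' (by positivity) <|
    Nat.log_lt_of_lt_pow' (by positivity) h

lemma blockIndex_eq {j k : ℕ} (h₁ : blockStart j ≤ k) (h₂ : k < blockStart (j + 1)) :
    blockIndex k = j :=
  le_antisymm (blockIndex_le h₂) (le_blockIndex h₁)

lemma lt_blockStart_blockIndex_succ (k : ℕ) : k < blockStart (blockIndex k + 1) :=
  (Nat.lt_pow_succ_log_self one_lt_two k).trans_le <|
    Nat.pow_le_pow_right two_pos (Nat.lt_pow_succ_log_self one_lt_two _)

lemma blockIndex_mono : Monotone blockIndex :=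
  Nat.log_monotone.comp Nat.log_monotone

lemma blockIndex_blockStart (j : ℕ) : blockIndex (blockStart j) = j :=
  blockIndex_eq le_rfl <|
    Nat.pow_lt_pow_right one_lt_two (Nat.pow_lt_pow_right one_lt_two j.lt_succ_self)

lemma tendsto_blockStart : Tendsto blockStart atTop atTop :=
  tendsto_atTop_mono (fun j => (lt_blockStart j).le) tendsto_id

lemma tendsto_blockStart_succ : Tendsto (fun j => blockStart (j + 1)) atTop atTop :=
  tendsto_blockStart.comp (tendsto_add_atTop_nat 1)

lemma tendsto_blockStart_add_div_blockStart_succ (c : ℝ) :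
    Tendsto (fun j => (blockStart j + c) / blockStart (j + 1)) atTop (𝓝 0) := by
  have h : Tendsto (fun x : ℝ => x⁻¹ + c * x⁻¹ ^ 2) atTop (𝓝 0) := by
    simpa using tendsto_inv_atTop_zero.add ((tendsto_inv_atTop_zero.pow 2).const_mul c)
  refine (h.comp (tendsto_natCast_atTop_atTop.comp tendsto_blockStart)).congr' ?_
  refine Eventually.of_forall fun j => ?_
  have : (blockStart j : ℝ) ≠ 0 := by simp [blockStart]
  simp only [comp_apply, blockStart_succ, Nat.cast_pow]
  field_simp

end Blocks

section SignedThueMorse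

/-- Odd blocks carry the fixed sign `false`; the block `2 * Nat.pair n s` carries `α n`, so every
coordinate of `α` governs infinitely many blocks. -/
def blockSign (α : ℕ → Bool) (j : ℕ) : Bool :=
  if Even j then α (Nat.unpair (j / 2)).1 else false

def signedThueMorse (α : ℕ → Bool) (k : ℕ) : Bool :=
  xor (thueMorse k) (blockSign α (blockIndex k))

lemma blockSign_of_odd (α : ℕ → Bool) {j : ℕ} (h : Odd j) : blockSign α j = false := by
  rw [blockSign, if_neg (Nat.not_even_iff_odd.2 h)]

lemma blockSign_two_mul_pair (α : ℕ → Bool) (n s : ℕ) :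
    blockSign α (2 * Nat.pair n s) = α n := by
  rw [blockSign, if_pos (even_two_mul _), Nat.mul_div_cancel_left _ two_pos, Nat.unpair_pair]

lemma signedThueMorse_eq_iff {α β : ℕ → Bool} {k : ℕ} :
    signedThueMorse α k = signedThueMorse β k ↔
      blockSign α (blockIndex k) = blockSign β (blockIndex k) :=
  Bool.bne_right_inj

lemma signedThueMorse_injective : Injective signedThueMorse := by
  intro α β h
  funext n
  simpa [blockIndex_blockStart, blockSign_two_mul_pair] using
    signedThueMorse_eq_iff.1 (congrFun h (blockStart (2 * Nat.pair n 0)))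

lemma continuous_signedThueMorse : Continuous signedThueMorse :=
  continuous_pi fun k =>
    (continuous_of_discreteTopology (f := fun b : Bool =>
      xor (thueMorse k) (if Even (blockIndex k) then b else false))).comp
      (continuous_apply (Nat.unpair (blockIndex k / 2)).1)

/-- Block boundaries beyond `blockStart n` are multiples of `2 ^ n`, so the aligned windows of
length `2 ^ n` there lie inside a single block. -/
lemma eventuallyThueMorse_signedThueMorse (α : ℕ → Bool) :
    EventuallyThueMorse (signedThueMorse α) := by
  intro n
  filter_upwards [eventually_ge_atTop (blockStart n)] with q hq i hi
  set j := blockIndex (2 ^ n * q)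
  have hnj : n ≤ j := le_blockIndex (hq.trans (Nat.le_mul_of_pos_left q (Nat.two_pow_pos n)))
  obtain ⟨w, hw⟩ := two_pow_dvd_blockStart (hnj.trans j.le_succ)
  have hqw : q < w := by
    have := lt_blockStart_blockIndex_succ (2 ^ n * q)
    rw [hw] at this
    exact Nat.lt_of_mul_lt_mul_left this
  have hij : blockIndex (2 ^ n * q + i) = j := by
    refine le_antisymm (blockIndex_le ?_) (blockIndex_mono (Nat.le_add_right _ _))
    calc 2 ^ n * q + i < 2 ^ n * (q + 1) := by rw [mul_add, mul_one]; omega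
      _ ≤ 2 ^ n * w := Nat.mul_le_mul_left _ hqw
      _ = blockStart (j + 1) := hw.symm
  simp only [signedThueMorse, hij, thueMorse_two_pow_mul_add hi, thueMorse_two_pow_mul, j]
  cases thueMorse q <;> cases thueMorse i <;> simp

end SignedThueMorse

section Dist2

lemma shift_iterate_apply (k : ℕ) (u : ℕ → Bool) (i : ℕ) : (shift^[k] u) i = u (i + k) := by
  induction k generalizing u with
  | zero => rfl
  | succ k ih => rw [iterate_succ_apply, ih, shift, add_assoc, add_comm k]

lemma continuous_shift : Continuous shift :=
  continuous_pi fun n => continuous_apply (n + 1)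

lemma tsum_half_pow_add_succ (R : ℕ) :
    ∑' i : ℕ, ((1 : ℝ) / 2) ^ (i + R + 1) = (1 / 2) ^ R := by
  rw [← tsum_geometric_two' (((1 : ℝ) / 2) ^ R)]
  congr 1 with i
  simp only [one_div, inv_pow, pow_add, pow_one]
  ring

lemma summable_half_pow_add_succ (R : ℕ) :
    Summable fun i : ℕ => ((1 : ℝ) / 2) ^ (i + R + 1) :=
  (summable_geometric_two.mul_left ((1 / 2) ^ (R + 1))).congr fun i => by ring

lemma summable_dist2 (u v : ℕ → Bool) :
    Summable fun i : ℕ => if u i = v i then (0 : ℝ) else (1 / 2) ^ (i + 1) :=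
  (summable_half_pow_add_succ 0).of_nonneg_of_le (fun i => by split_ifs <;> positivity)
    (fun i => by split_ifs <;> simp)

lemma dist2_comm (u v : ℕ → Bool) : dist2 u v = dist2 v u := by
  unfold dist2
  congr 1 with i
  simp_rw [eq_comm (a := u i)]

lemma dist2_nonneg (u v : ℕ → Bool) : 0 ≤ dist2 u v :=
  tsum_nonneg fun i => by split_ifs <;> positivity

lemma dist2_le_of_forall_lt_eq {u v : ℕ → Bool} {R : ℕ} (h : ∀ i < R, u i = v i) :
    dist2 u v ≤ (1 / 2) ^ R := by
  rw [dist2, ← (summable_dist2 u v).sum_add_tsum_nat_add R, Finset.sum_eq_zero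
    fun i hi => if_pos (h i (Finset.mem_range.1 hi)), zero_add, ← tsum_half_pow_add_succ R]
  refine ((summable_dist2 u v).comp_injective (add_left_injective R)).tsum_le_tsum
    (fun i => ?_) (summable_half_pow_add_succ R)
  split_ifs <;> simp

lemma dist2_le_one (u v : ℕ → Bool) : dist2 u v ≤ 1 := by
  simpa using dist2_le_of_forall_lt_eq (u := u) (v := v) (R := 0) (by simp)

lemma half_pow_succ_le_dist2 {u v : ℕ → Bool} {i : ℕ} (h : u i ≠ v i) :
    (1 / 2) ^ (i + 1) ≤ dist2 u v := by
  simpa [h, dist2] using (summable_dist2 u v).le_tsum i fun j _ => by split_ifs <;> positivity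

lemma one_sub_le_dist2 {u v : ℕ → Bool} {R : ℕ} (h : ∀ i < R, u i ≠ v i) :
    1 - (1 / 2) ^ R ≤ dist2 u v := by
  have hsum : ∑ i ∈ Finset.range R, ((1 : ℝ) / 2) ^ (i + 1) = 1 - (1 / 2) ^ R := by
    have h0 : ∑' i : ℕ, ((1 : ℝ) / 2) ^ (i + 1) = 1 := by simpa using tsum_half_pow_add_succ 0
    have := (summable_half_pow_add_succ 0).sum_add_tsum_nat_add R
    simp only [add_zero, tsum_half_pow_add_succ, h0] at this
    linarith
  rw [← hsum, dist2]
  calc ∑ i ∈ Finset.range R, ((1 : ℝ) / 2) ^ (i + 1)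
      = ∑ i ∈ Finset.range R, if u i = v i then (0 : ℝ) else (1 / 2) ^ (i + 1) :=
        Finset.sum_congr rfl fun i hi => (if_neg (h i (Finset.mem_range.1 hi))).symm
    _ ≤ _ := (summable_dist2 u v).sum_le_tsum _ fun i _ => by split_ifs <;> positivity

lemma diam2_le_one (X : Set (ℕ → Bool)) : diam2 X ≤ 1 :=
  Real.sSup_le (by rintro r ⟨u, -, v, -, rfl⟩; exact dist2_le_one u v) zero_le_one

end Dist2

section Density

noncomputable def density (P : ℕ → Prop) [DecidablePred P] (m : ℕ) : ℝ :=
  ((Finset.Ioo 0 m).filter P).card / m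

variable {P : ℕ → Prop} [DecidablePred P]

lemma density_nonneg (m : ℕ) : 0 ≤ density P m := by
  unfold density; positivity

lemma density_le_one (m : ℕ) : density P m ≤ 1 := by
  refine div_le_one_of_le₀ ?_ (Nat.cast_nonneg m)
  exact_mod_cast (Finset.card_filter_le _ _).trans (by simp)

lemma card_filter_Ioo_le {a R m : ℕ} (h : ∀ k, a ≤ k → k + R < m → ¬ P k) :
    ((Finset.Ioo 0 m).filter P).card ≤ a + R := by
  calc ((Finset.Ioo 0 m).filter P).card ≤ (Finset.range a ∪ Finset.Ico (m - R) m).card := by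
        refine Finset.card_le_card fun k hk => ?_
        simp only [Finset.mem_filter, Finset.mem_Ioo] at hk
        simp only [Finset.mem_union, Finset.mem_range, Finset.mem_Ico]
        by_contra! hc
        exact h k hc.1 (by omega) hk.2
    _ ≤ a + R := (Finset.card_union_le _ _).trans (by simp; omega)

lemma density_le {a R m : ℕ} (h : ∀ k, a ≤ k → k + R < m → ¬ P k) :
    density P m ≤ (a + R) / m := by
  unfold density
  gcongr
  exact_mod_cast card_filter_Ioo_le h

lemma one_sub_le_density {a R m : ℕ} (hm : 0 < m) (h : ∀ k, a ≤ k → k + R < m → P k) :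
    1 - (a + (R + 1)) / m ≤ density P m := by
  have hcard := Finset.card_filter_add_card_filter_not (s := Finset.Ioo 0 m) P
  have hnot := card_filter_Ioo_le (P := fun k => ¬ P k) fun k h₁ h₂ => not_not.2 (h k h₁ h₂)
  rw [Nat.card_Ioo] at hcard
  have hm' : (0 : ℝ) < m := by exact_mod_cast hm
  rw [density, sub_le_iff_le_add, ← add_div, le_div_iff₀ hm']
  have : (m : ℝ) ≤ ((Finset.Ioo 0 m).filter P).card + (a + R) + 1 := by
    exact_mod_cast (show m ≤ ((Finset.Ioo 0 m).filter P).card + (a + R) + 1 by omega)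
  linarith

lemma liminf_density_eq_zero (h : ∀ η > 0, ∃ᶠ m in atTop, density P m ≤ η) :
    liminf (density P) atTop = 0 := by
  have hbdd : IsBoundedUnder (· ≥ ·) atTop (density P) :=
    isBoundedUnder_of ⟨0, density_nonneg⟩
  refine le_antisymm (le_of_forall_pos_le_add fun η hη => ?_) ?_
  · simpa using liminf_le_of_frequently_le (h η hη) hbdd
  · exact le_liminf_of_le (isBoundedUnder_of ⟨1, density_le_one⟩).isCoboundedUnder_ge
      (Eventually.of_forall density_nonneg)

lemma limsup_density_eq_one (h : ∀ η > 0, ∃ᶠ m in atTop, 1 - η ≤ density P m) :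
    limsup (density P) atTop = 1 := by
  have hbdd : IsBoundedUnder (· ≤ ·) atTop (density P) :=
    isBoundedUnder_of ⟨1, density_le_one⟩
  refine le_antisymm ?_ (le_of_forall_pos_le_add fun η hη => ?_)
  · exact limsup_le_of_le (isBoundedUnder_of ⟨0, density_nonneg⟩).isCoboundedUnder_le
      (Eventually.of_forall density_le_one)
  · linarith [le_limsup_of_frequently_le (h η hη) hbdd]

/-- Along block ends `m = blockStart (j + 1)` the block `j` fills almost all of `(0, m)`. -/
lemma frequently_density_le {J : ℕ → Prop} (hJ : ∃ᶠ j in atTop, J j) (R : ℕ)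
    (hP : ∀ j, J j → ∀ k, blockStart j ≤ k → k + R < blockStart (j + 1) → ¬ P k)
    {η : ℝ} (hη : 0 < η) : ∃ᶠ m in atTop, density P m ≤ η := by
  have hsmall := (tendsto_blockStart_add_div_blockStart_succ R).eventually (gt_mem_nhds hη)
  refine tendsto_blockStart_succ.frequently
    ((hJ.and_eventually hsmall).mono fun j ⟨hj, hlt⟩ => ?_)
  exact (density_le (hP j hj)).trans hlt.le

lemma frequently_one_sub_le_density {J : ℕ → Prop} (hJ : ∃ᶠ j in atTop, J j) (R : ℕ)
    (hP : ∀ j, J j → ∀ k, blockStart j ≤ k → k + R < blockStart (j + 1) → P k)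
    {η : ℝ} (hη : 0 < η) : ∃ᶠ m in atTop, 1 - η ≤ density P m := by
  have hsmall :=
    (tendsto_blockStart_add_div_blockStart_succ (R + 1)).eventually (gt_mem_nhds hη)
  refine tendsto_blockStart_succ.frequently
    ((hJ.and_eventually hsmall).mono fun j ⟨hj, hlt⟩ => ?_)
  refine le_trans ?_ (one_sub_le_density ((Nat.zero_le _).trans_lt (lt_blockStart _)) (hP j hj))
  linarith

end Density

section Distributional

variable {α β : ℕ → Bool} {j k R : ℕ}

lemma dist2_shift_le_of_blockSign_eq (hs : blockSign α j = blockSign β j)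
    (h₁ : blockStart j ≤ k) (h₂ : k + R < blockStart (j + 1)) :
    dist2 (shift^[k] (signedThueMorse α)) (shift^[k] (signedThueMorse β)) ≤ (1 / 2) ^ R :=
  dist2_le_of_forall_lt_eq fun i hi => by
    rw [shift_iterate_apply, shift_iterate_apply, signedThueMorse_eq_iff,
      blockIndex_eq (j := j) (by omega) (by omega), hs]

lemma one_sub_le_dist2_shift_of_blockSign_ne (hs : blockSign α j ≠ blockSign β j)
    (h₁ : blockStart j ≤ k) (h₂ : k + R < blockStart (j + 1)) :
    1 - (1 / 2) ^ R ≤ dist2 (shift^[k] (signedThueMorse α)) (shift^[k] (signedThueMorse β)) :=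
  one_sub_le_dist2 fun i hi => by
    rw [shift_iterate_apply, shift_iterate_apply, Ne, signedThueMorse_eq_iff,
      blockIndex_eq (j := j) (by omega) (by omega)]
    exact hs

lemma phiStar_signedThueMorse (α β : ℕ → Bool) {ε : ℝ} (hε : 0 < ε) :
    PhiStar (signedThueMorse α) (signedThueMorse β) ε = 1 := by
  obtain ⟨R, hR⟩ := exists_pow_lt_of_lt_one hε (by norm_num : (1 : ℝ) / 2 < 1)
  have hodd : ∃ᶠ j in atTop, Odd j :=
    frequently_atTop.2 fun a => ⟨2 * a + 1, by omega, odd_two_mul_add_one a⟩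
  refine limsup_density_eq_one fun η hη => frequently_one_sub_le_density hodd R ?_ hη
  intro j hj k h₁ h₂
  have hs : blockSign α j = blockSign β j := by
    rw [blockSign_of_odd α hj, blockSign_of_odd β hj]
  exact (dist2_shift_le_of_blockSign_eq hs h₁ h₂).trans_lt hR

lemma phi_signedThueMorse (hαβ : α ≠ β) {δ : ℝ} (hδ : δ < 1) :
    Phi (signedThueMorse α) (signedThueMorse β) δ = 0 := by
  obtain ⟨n, hn⟩ := Function.ne_iff.1 hαβ
  obtain ⟨R, hR⟩ := exists_pow_lt_of_lt_one (sub_pos.2 hδ) (by norm_num : (1 : ℝ) / 2 < 1)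
  have hne : ∃ᶠ j in atTop, blockSign α j ≠ blockSign β j :=
    frequently_atTop.2 fun a => ⟨2 * Nat.pair n a, (Nat.right_le_pair n a).trans (by omega),
      by rwa [blockSign_two_mul_pair, blockSign_two_mul_pair]⟩
  refine liminf_density_eq_zero fun η hη => frequently_density_le hne R ?_ hη
  intro j hj k h₁ h₂
  have := one_sub_le_dist2_shift_of_blockSign_ne hj h₁ h₂
  exact not_lt.2 (by linarith)

end Distributional

section Triples

lemma not_scrTriple_of_eventually_le {x y z : ℕ → Bool} {ε : ℝ} (hε : 0 < ε)
    (h : ∀ᶠ k in atTop, ε ≤ max (max (dist2 (shift^[k] x) (shift^[k] y))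
      (dist2 (shift^[k] x) (shift^[k] z))) (dist2 (shift^[k] y) (shift^[k] z))) :
    ¬ ScrTriple x y z := fun hs => by
  have hbdd : IsBoundedUnder (· ≤ ·) atTop fun k => max (max (dist2 (shift^[k] x) (shift^[k] y))
      (dist2 (shift^[k] x) (shift^[k] z))) (dist2 (shift^[k] y) (shift^[k] z)) :=
    isBoundedUnder_of ⟨1, fun k => max_le (max_le (dist2_le_one _ _) (dist2_le_one _ _))
      (dist2_le_one _ _)⟩
  linarith [le_liminf_of_le hbdd.isCoboundedUnder_ge h, hs.2.2.2.1]

lemma not_scrTriple_of_tendsto_min {x y z : ℕ → Bool}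
    (h : Tendsto (fun k => min (min (dist2 (shift^[k] x) (shift^[k] y))
      (dist2 (shift^[k] x) (shift^[k] z))) (dist2 (shift^[k] y) (shift^[k] z))) atTop (𝓝 0)) :
    ¬ ScrTriple x y z :=
  fun hs => hs.2.2.2.2.ne' h.limsup_eq

lemma eventually_le_dist2_shift_of_ne {a b : ℕ} (hab : a ≠ b) (α β : ℕ → Bool) :
    ∃ ε > 0, ∀ᶠ k in atTop, ε ≤ dist2 (shift^[k] (shift^[a] (signedThueMorse α)))
      (shift^[k] (shift^[b] (signedThueMorse β))) := by
  wlog h : a < b generalizing a b α β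
  · obtain ⟨ε, hε, hk⟩ := this hab.symm β α (by omega)
    exact ⟨ε, hε, hk.mono fun k hk => (dist2_comm _ _).symm ▸ hk⟩
  obtain ⟨L, hL⟩ := (eventuallyThueMorse_signedThueMorse α).exists_ne_of_ne_zero
    (eventuallyThueMorse_signedThueMorse β) (Nat.sub_ne_zero_of_lt h)
  refine ⟨(1 / 2) ^ L, by positivity, ?_⟩
  filter_upwards [(tendsto_add_atTop_nat a).eventually hL] with k ⟨i, hi, hne⟩
  refine (pow_le_pow_of_le_one (by norm_num) (by norm_num) hi).trans
    (half_pow_succ_le_dist2 ?_)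
  simp only [shift_iterate_apply]
  convert hne using 2 <;> omega

/-- Signs agreeing on the block of `p` and the next one make the sequences agree on `[p, 2p)`,
because `blockStart (j + 2) = blockStart (j + 1) ^ 2`. -/
lemma dist2_shift_le_of_blockSign_eq_of_succ {α β : ℕ → Bool} {p : ℕ}
    (h₀ : blockSign α (blockIndex p) = blockSign β (blockIndex p))
    (h₁ : blockSign α (blockIndex p + 1) = blockSign β (blockIndex p + 1)) :
    dist2 (shift^[p] (signedThueMorse α)) (shift^[p] (signedThueMorse β)) ≤ (1 / 2) ^ p := by
  refine dist2_le_of_forall_lt_eq fun i hi => ?_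
  rw [shift_iterate_apply, shift_iterate_apply, signedThueMorse_eq_iff]
  have hp := lt_blockStart_blockIndex_succ p
  have h2 : 2 ≤ blockStart (blockIndex p + 1) := Nat.one_lt_two_pow (by positivity)
  have hle : blockIndex (i + p) ≤ blockIndex p + 1 :=
    blockIndex_le (by rw [blockStart_succ (blockIndex p + 1)]; nlinarith)
  rcases (blockIndex_mono (Nat.le_add_left p i)).eq_or_lt with h | h
  · rwa [← h]
  · rwa [show blockIndex (i + p) = blockIndex p + 1 by omega]

/-- One of two consecutive blocks has the fixed sign, so two of three sign sequences agree on
both. -/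
lemma blockSign_pigeonhole (α β γ : ℕ → Bool) (j : ℕ) :
    (blockSign α j = blockSign β j ∧ blockSign α (j + 1) = blockSign β (j + 1)) ∨
    (blockSign α j = blockSign γ j ∧ blockSign α (j + 1) = blockSign γ (j + 1)) ∨
    (blockSign β j = blockSign γ j ∧ blockSign β (j + 1) = blockSign γ (j + 1)) := by
  rcases Nat.even_or_odd j with h | h
  · simp only [blockSign_of_odd _ h.add_one, and_true]
    cases blockSign α j <;> cases blockSign β j <;> cases blockSign γ j <;> simp
  · simp only [blockSign_of_odd _ h, true_and]
    cases blockSign α (j + 1) <;> cases blockSign β (j + 1) <;> cases blockSign γ (j + 1) <;>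
      simp

lemma min_dist2_shift_le (α β γ : ℕ → Bool) (p : ℕ) :
    min (min (dist2 (shift^[p] (signedThueMorse α)) (shift^[p] (signedThueMorse β)))
      (dist2 (shift^[p] (signedThueMorse α)) (shift^[p] (signedThueMorse γ))))
      (dist2 (shift^[p] (signedThueMorse β)) (shift^[p] (signedThueMorse γ))) ≤ (1 / 2) ^ p := by
  rcases blockSign_pigeonhole α β γ (blockIndex p) with ⟨h₀, h₁⟩ | ⟨h₀, h₁⟩ | ⟨h₀, h₁⟩
  · exact (min_le_left _ _).trans <| (min_le_left _ _).trans
      (dist2_shift_le_of_blockSign_eq_of_succ h₀ h₁)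
  · exact (min_le_left _ _).trans <| (min_le_right _ _).trans
      (dist2_shift_le_of_blockSign_eq_of_succ h₀ h₁)
  · exact (min_le_right _ _).trans (dist2_shift_le_of_blockSign_eq_of_succ h₀ h₁)

lemma not_scrTriple_shift_signedThueMorse (a b c : ℕ) (α β γ : ℕ → Bool) :
    ¬ ScrTriple (shift^[a] (signedThueMorse α)) (shift^[b] (signedThueMorse β))
      (shift^[c] (signedThueMorse γ)) := by
  by_cases hab : a = b
  · by_cases hac : a = c
    · subst hab hac
      refine not_scrTriple_of_tendsto_min <| squeeze_zero
        (fun k => le_min (le_min (dist2_nonneg _ _) (dist2_nonneg _ _)) (dist2_nonneg _ _))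
        (fun k => ?_) ((tendsto_pow_atTop_nhds_zero_of_lt_one (by norm_num : (0 : ℝ) ≤ 1 / 2)
          (by norm_num)).comp (tendsto_add_atTop_nat a))
      simpa only [← iterate_add_apply, comp_apply] using min_dist2_shift_le α β γ (k + a)
    · obtain ⟨ε, hε, h⟩ := eventually_le_dist2_shift_of_ne hac α γ
      exact not_scrTriple_of_eventually_le hε
        (h.mono fun k hk => hk.trans ((le_max_right _ _).trans (le_max_left _ _)))
  · obtain ⟨ε, hε, h⟩ := eventually_le_dist2_shift_of_ne hab α β
    exact not_scrTriple_of_eventually_le hε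
      (h.mono fun k hk => hk.trans ((le_max_left _ _).trans (le_max_left _ _)))

end Triples

section Cantor

def shiftedFamily (n : ℕ) : Set (ℕ → Bool) := shift^[n] '' range signedThueMorse

lemma continuous_shift_iterate_signedThueMorse (n : ℕ) :
    Continuous fun α => shift^[n] (signedThueMorse α) :=
  (continuous_shift.iterate n).comp continuous_signedThueMorse

lemma isCompact_shiftedFamily (n : ℕ) : IsCompact (shiftedFamily n) := by
  rw [shiftedFamily, ← range_comp]
  exact isCompact_range (continuous_shift_iterate_signedThueMorse n)

lemma tendsto_update_nhds {X : Type*} [TopologicalSpace X] (α b : ℕ → X) :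
    Tendsto (fun N => update α N (b N)) atTop (𝓝 α) :=
  tendsto_pi_nhds.2 fun i => tendsto_const_nhds.congr' <|
    (eventually_gt_atTop i).mono fun _ hN => (update_of_ne hN.ne _ _).symm

/-- Flipping `α` at `N → ∞` gives points of the family converging to the original one, and
differing from it at `blockStart (2 * Nat.pair N 0) ≥ n`. -/
lemma perfect_shiftedFamily (n : ℕ) : Perfect (shiftedFamily n) := by
  refine ⟨(isCompact_shiftedFamily n).isClosed, ?_⟩
  rintro _ ⟨_, ⟨α, rfl⟩, rfl⟩
  rw [accPt_iff_frequently]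
  refine ((continuous_shift_iterate_signedThueMorse n).tendsto α |>.comp
    (tendsto_update_nhds α fun N => !α N)).frequently (Eventually.frequently ?_)
  filter_upwards [eventually_ge_atTop n] with N hN
  refine ⟨fun h => ?_, mem_image_of_mem _ (mem_range_self _)⟩
  set p := blockStart (2 * Nat.pair N 0)
  have hnp : n ≤ p := hN.trans <| (Nat.left_le_pair N 0).trans <|
    (Nat.le_mul_of_pos_left _ two_pos).trans (lt_blockStart _).le
  have := congrFun h (p - n)
  rw [comp_apply, shift_iterate_apply, shift_iterate_apply, Nat.sub_add_cancel hnp,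
    signedThueMorse_eq_iff, blockIndex_blockStart, blockSign_two_mul_pair,
    blockSign_two_mul_pair, update_self] at this
  exact Bool.not_ne_self _ this

lemma isCantorSet_shiftedFamily (n : ℕ) : IsCantorSet (shiftedFamily n) :=
  ⟨(range_nonempty _).image _, isCompact_shiftedFamily n, perfect_shiftedFamily n,
    isTotallyDisconnected_of_totallyDisconnectedSpace _⟩

lemma shift_mem_iUnion_shiftedFamily {x : ℕ → Bool} (hx : x ∈ ⋃ n, shiftedFamily n) :
    shift x ∈ ⋃ n, shiftedFamily n := by
  obtain ⟨n, _, ⟨α, rfl⟩, rfl⟩ := mem_iUnion.1 hx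
  exact mem_iUnion.2 ⟨n + 1, _, mem_range_self α, iterate_succ_apply' _ _ _⟩

lemma not_countable_range_signedThueMorse : ¬ (range signedThueMorse).Countable := by
  have : Uncountable (ℕ → Bool) :=
    Cardinal.aleph0_lt_mk_iff.1 (by simpa using Cardinal.cantor Cardinal.aleph0)
  intro h
  have := h.to_subtype
  exact not_countable (rangeFactorization_injective.2 signedThueMorse_injective).countable

end Cantor

theorem stmt18 : ∃ X : Set (ℕ → Bool),
    (∃ C : ℕ → Set (ℕ → Bool), (∀ n, IsCantorSet (C n)) ∧ X = ⋃ n, C n) ∧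
    (∀ x ∈ X, shift x ∈ X) ∧
    ∃ D : Set (ℕ → Bool), D ⊆ X ∧ ¬ D.Countable ∧
    (∀ x ∈ D, ∀ y ∈ D, x ≠ y →
      (∀ ε > 0, PhiStar x y ε = 1) ∧ (∀ δ : ℝ, 0 < δ → δ < diam2 X → Phi x y δ = 0)) ∧
    ∀ x ∈ X, ∀ y ∈ X, ∀ z ∈ X, ¬ ScrTriple x y z := by
  refine ⟨⋃ n, shiftedFamily n, ⟨shiftedFamily, isCantorSet_shiftedFamily, rfl⟩,
    fun x hx => shift_mem_iUnion_shiftedFamily hx, range signedThueMorse,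
    fun x hx => mem_iUnion.2 ⟨0, x, hx, rfl⟩, not_countable_range_signedThueMorse, ?_, ?_⟩
  · rintro _ ⟨α, rfl⟩ _ ⟨β, rfl⟩ hne
    exact ⟨fun ε hε => phiStar_signedThueMorse α β hε,
      fun δ _ hδ => phi_signedThueMorse (ne_of_apply_ne _ hne) (hδ.trans_le (diam2_le_one _))⟩
  · intro x hx y hy z hz
    obtain ⟨a, _, ⟨α, rfl⟩, rfl⟩ := mem_iUnion.1 hx
    obtain ⟨b, _, ⟨β, rfl⟩, rfl⟩ := mem_iUnion.1 hy
    obtain ⟨c, _, ⟨γ, rfl⟩, rfl⟩ := mem_iUnion.1 hz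
    exact not_scrTriple_shift_signedThueMorse a b c α β γ
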